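/- arXiv:1202.0592 — 4 statements merged into one kernel-verified Lean document; each statement's English description precedes it below -/
import Mathlib

section
/- Let g : ℝ → ℝ be a nonnegative Lebesgue-integrable function with ∫_ℝ g = 1, and let f_u : ℝ → ℝ be a nonnegative, nondecreasing, continuous function. Define B(t) = ∫_{(-∞, t]} f_u(r) g(r) dr + ∫_{(t, ∞)} g(r) dr. If r₁ ∈ ℝ satisfies f_u(r₁) = 1, then B(r₁) ≤ B(t) for every t ∈ ℝ, i.e., r₁ is a global minimizer of B. -/
open MeasureTheory Set

/-- Theorem 1 (main part): if `f_u` is nonnegative, nondecreasing and continuous and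
`f_u r₁ = 1`, then `r₁` globally minimizes
`B(t) = ∫_{(-∞,t]} f_u g + ∫_{(t,∞)} g`. -/
theorem stmt1
    (g : ℝ → ℝ) (hg0 : ∀ r, 0 ≤ g r) (hgint : Integrable g) (hg1 : ∫ r, g r = 1)
    (f_u : ℝ → ℝ) (hf0 : ∀ r, 0 ≤ f_u r) (hfmono : Monotone f_u)
    (hfcont : Continuous f_u)
    (B : ℝ → ℝ)
    (hB : ∀ t, B t = (∫ r in Iic t, f_u r * g r) + ∫ r in Ioi t, g r)
    (r₁ : ℝ) (hr₁ : f_u r₁ = 1) :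
    ∀ t : ℝ, B r₁ ≤ B t := by
  have hmeas : AEStronglyMeasurable (fun r => f_u r * g r) volume :=
    hfcont.aestronglyMeasurable.mul hgint.aestronglyMeasurable
  -- integrability of f_u * g on Iic t
  have hint : ∀ t : ℝ, IntegrableOn (fun r => f_u r * g r) (Iic t) := by
    intro t
    refine Integrable.mono ((hgint.const_mul (f_u t)).restrict) hmeas.restrict ?_
    filter_upwards [ae_restrict_mem measurableSet_Iic] with r hr
    rw [Real.norm_eq_abs, Real.norm_eq_abs, abs_of_nonneg (mul_nonneg (hf0 r) (hg0 r)),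
      abs_of_nonneg (mul_nonneg (le_trans (hf0 r) (hfmono hr)) (hg0 r))]
    exact mul_le_mul_of_nonneg_right (hfmono hr) (hg0 r)
  intro t
  rcases le_total r₁ t with h | h
  · -- split Iic t = Iic r₁ ∪ Ioc r₁ t, Ioi r₁ = Ioc r₁ t ∪ Ioi t
    have h1 : (∫ r in Iic t, f_u r * g r)
        = (∫ r in Iic r₁, f_u r * g r) + ∫ r in Ioc r₁ t, f_u r * g r := by
      rw [← Set.Iic_union_Ioc_eq_Iic h,
        setIntegral_union (Iic_disjoint_Ioc le_rfl) measurableSet_Ioc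
          ((hint t).mono_set (Iic_subset_Iic.2 h)) ((hint t).mono_set Ioc_subset_Iic_self)]
    have h2 : (∫ r in Ioi r₁, g r)
        = (∫ r in Ioc r₁ t, g r) + ∫ r in Ioi t, g r := by
      rw [← Set.Ioc_union_Ioi_eq_Ioi h,
        setIntegral_union (Ioc_disjoint_Ioi le_rfl) measurableSet_Ioi
          (hgint.integrableOn) (hgint.integrableOn)]
    have key : (∫ r in Ioc r₁ t, g r) ≤ ∫ r in Ioc r₁ t, f_u r * g r := by
      refine setIntegral_mono_on (hgint.integrableOn)
        ((hint t).mono_set Ioc_subset_Iic_self) measurableSet_Ioc ?_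
      intro r hr
      nth_rewrite 1 [← one_mul (g r)]
      exact mul_le_mul_of_nonneg_right (hr₁ ▸ hfmono hr.1.le) (hg0 r)
    rw [hB, hB, h1, h2]
    linarith
  · have h1 : (∫ r in Iic r₁, f_u r * g r)
        = (∫ r in Iic t, f_u r * g r) + ∫ r in Ioc t r₁, f_u r * g r := by
      rw [← Set.Iic_union_Ioc_eq_Iic h,
        setIntegral_union (Iic_disjoint_Ioc le_rfl) measurableSet_Ioc
          ((hint r₁).mono_set (Iic_subset_Iic.2 h)) ((hint r₁).mono_set Ioc_subset_Iic_self)]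
    have h2 : (∫ r in Ioi t, g r)
        = (∫ r in Ioc t r₁, g r) + ∫ r in Ioi r₁, g r := by
      rw [← Set.Ioc_union_Ioi_eq_Ioi h,
        setIntegral_union (Ioc_disjoint_Ioi le_rfl) measurableSet_Ioi
          (hgint.integrableOn) (hgint.integrableOn)]
    have key : (∫ r in Ioc t r₁, f_u r * g r) ≤ ∫ r in Ioc t r₁, g r := by
      refine setIntegral_mono_on ((hint r₁).mono_set Ioc_subset_Iic_self)
        (hgint.integrableOn) measurableSet_Ioc ?_
      intro r hr
      nth_rewrite 2 [← one_mul (g r)]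
      exact mul_le_mul_of_nonneg_right (hr₁ ▸ hfmono hr.2) (hg0 r)
    rw [hB, hB, h1, h2]
    linarith
end

section
/- Let (Ω, 𝓕, P) be a probability space, E ∈ 𝓕 an event, and R : Ω → ℝ a measurable random variable whose law has density g with respect to Lebesgue measure. Let f_u : ℝ → ℝ be a nonnegative measurable function such that P[1_E | σ(R)] ≤ f_u ∘ R P-almost everywhere. Then for every Lebesgue-measurable set A ⊆ ℝ, P(E) ≤ ∫_A f_u(r) g(r) dr + ∫_{ℝ \ A} g(r) dr, where the integrals are Lebesgue integrals of nonnegative functions (possibly +∞). -/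
open MeasureTheory

/-! On the event `{R ∈ A}` the probability of `E` is the integral of `P[1_E | σ(R)]`, which is
at most the integral of `f_u ∘ R`, i.e. `∫_A f_u g` by the change of variables `R_* P = g dr`;
off that event `P(E)` is bounded by `P(R ∉ A) = ∫_{ℝ \ A} g`. -/

section CondExp

variable {Ω : Type*} {m m₀ : MeasurableSpace Ω} {P : Measure Ω} [IsFiniteMeasure P]
  {E S : Set Ω}

theorem measure_inter_eq_setLIntegral_condExp_indicator (hm : m ≤ m₀)
    (hE : MeasurableSet E) (hS : MeasurableSet[m] S) :
    P (E ∩ S) = ∫⁻ ω in S, ENNReal.ofReal (P[E.indicator fun _ => (1 : ℝ) | m] ω) ∂P := by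
  have hint : Integrable (E.indicator fun _ => (1 : ℝ)) P :=
    (integrable_const 1).indicator hE
  have hnonneg : 0 ≤ᵐ[P.restrict S] P[E.indicator fun _ => (1 : ℝ) | m] :=
    ae_restrict_of_ae (condExp_nonneg (Filter.Eventually.of_forall
      (Set.indicator_nonneg fun _ _ => zero_le_one)))
  rw [← ofReal_integral_eq_lintegral_ofReal integrable_condExp.integrableOn hnonneg,
    setIntegral_condExp hm hint hS, setIntegral_indicator hE, setIntegral_const, smul_eq_mul,
    mul_one, measureReal_def, ENNReal.ofReal_toReal (measure_ne_top _ _), Set.inter_comm]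

theorem measure_inter_le_setLIntegral_of_condExp_indicator_le (hm : m ≤ m₀)
    (hE : MeasurableSet E) (hS : MeasurableSet[m] S) {h : Ω → ℝ}
    (hle : P[E.indicator fun _ => (1 : ℝ) | m] ≤ᵐ[P] h) :
    P (E ∩ S) ≤ ∫⁻ ω in S, ENNReal.ofReal (h ω) ∂P := by
  rw [measure_inter_eq_setLIntegral_condExp_indicator hm hE hS]
  exact lintegral_mono_ae (ae_restrict_of_ae (hle.mono fun _ hω => ENNReal.ofReal_le_ofReal hω))

end CondExp

theorem setLIntegral_preimage_eq_setLIntegral_mul_density {Ω α : Type*} [MeasurableSpace Ω]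
    [MeasurableSpace α] {P : Measure Ω} {μ : Measure α} [SFinite μ] {R : Ω → α}
    (hR : Measurable R) {ρ F : α → ENNReal} (hρ : Measurable ρ) (hF : Measurable F)
    (hlaw : P.map R = μ.withDensity ρ) {A : Set α} (hA : MeasurableSet A) :
    ∫⁻ ω in R ⁻¹' A, F (R ω) ∂P = ∫⁻ r in A, F r * ρ r ∂μ := by
  rw [← setLIntegral_map hA hF hR, hlaw,
    setLIntegral_withDensity_eq_setLIntegral_mul _ hρ hF hA]
  simp only [Pi.mul_apply, mul_comm]

theorem stmt6_general
    {Ω : Type*} [MeasurableSpace Ω] (P : Measure Ω) [IsProbabilityMeasure P]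
    (E : Set Ω) (hE : MeasurableSet E)
    (R : Ω → ℝ) (hR : Measurable R)
    (g : ℝ → ℝ) (hgmeas : Measurable g)
    (hlaw : P.map R = volume.withDensity (fun r => ENNReal.ofReal (g r)))
    (f_u : ℝ → ℝ) (hfmeas : Measurable f_u)
    (hce : ∀ᵐ ω ∂P,
      MeasureTheory.condExp (MeasurableSpace.comap R Real.measurableSpace) P
        (E.indicator fun _ => (1 : ℝ)) ω ≤ f_u (R ω))
    (A : Set ℝ) (hA : MeasurableSet A) :
    P E ≤ (∫⁻ r in A, ENNReal.ofReal (f_u r) * ENNReal.ofReal (g r)) +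
      ∫⁻ r in Aᶜ, ENNReal.ofReal (g r) := by
  have hSσ : MeasurableSet[MeasurableSpace.comap R Real.measurableSpace] (R ⁻¹' A) :=
    ⟨A, hA, rfl⟩
  have hin : P (E ∩ R ⁻¹' A) ≤ ∫⁻ r in A, ENNReal.ofReal (f_u r) * ENNReal.ofReal (g r) := by
    rw [← setLIntegral_preimage_eq_setLIntegral_mul_density hR hgmeas.ennreal_ofReal
      hfmeas.ennreal_ofReal hlaw hA]
    exact measure_inter_le_setLIntegral_of_condExp_indicator_le hR.comap_le hE hSσ hce
  have hout : P (E \ R ⁻¹' A) ≤ ∫⁻ r in Aᶜ, ENNReal.ofReal (g r) :=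
    calc P (E \ R ⁻¹' A) ≤ P (R ⁻¹' Aᶜ) := measure_mono (Set.sdiff_subset_compl _ _)
      _ = ∫⁻ r in Aᶜ, ENNReal.ofReal (g r) := by
        rw [← Measure.map_apply hR hA.compl, hlaw, withDensity_apply _ hA.compl]
  rw [← measure_inter_add_sdiff E (hR hA)]
  exact add_le_add hin hout

/-- Theorem 2 (first inequality): the GFBT with an arbitrary Lebesgue-measurable
parameter set `A`: `P(E) ≤ ∫_A f_u g + ∫_{ℝ \ A} g`. -/
theorem stmt6
    {Ω : Type*} [MeasurableSpace Ω] (P : Measure Ω) [IsProbabilityMeasure P]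
    (E : Set Ω) (hE : MeasurableSet E)
    (R : Ω → ℝ) (hR : Measurable R)
    (g : ℝ → ℝ) (hg0 : ∀ r, 0 ≤ g r) (hgmeas : Measurable g)
    (hg1 : ∫⁻ r, ENNReal.ofReal (g r) = 1)
    (hlaw : P.map R = volume.withDensity (fun r => ENNReal.ofReal (g r)))
    (f_u : ℝ → ℝ) (hf0 : ∀ r, 0 ≤ f_u r) (hfmeas : Measurable f_u)
    (hce : ∀ᵐ ω ∂P,
      MeasureTheory.condExp (MeasurableSpace.comap R Real.measurableSpace) P
        (E.indicator fun _ => (1 : ℝ)) ω ≤ f_u (R ω))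
    (A : Set ℝ) (hA : MeasurableSet A) :
    P E ≤ (∫⁻ r in A, ENNReal.ofReal (f_u r) * ENNReal.ofReal (g r)) +
      ∫⁻ r in Aᶜ, ENNReal.ofReal (g r) :=
  stmt6_general P E hE R hR g hgmeas hlaw f_u hfmeas hce A hA
end

section
/- Let S be a nonempty index set (the set of SNR values), and for each σ ∈ S let g_σ : ℝ → ℝ be a nonnegative Lebesgue-integrable function with ∫_ℝ g_σ = 1. Let f_u : ℝ → ℝ be a nonnegative, nondecreasing, continuous function (the same function for all σ ∈ S), and define B_σ(t) = ∫_{(-∞, t]} f_u(r) g_σ(r) dr + ∫_{(t, ∞)} g_σ(r) dr. If r₁ ∈ ℝ satisfies f_u(r₁) = 1, then for every σ ∈ S and every t ∈ ℝ, B_σ(r₁) ≤ B_σ(t); that is, the single parameter r₁ simultaneously minimizes B_σ for all σ. -/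
/-!
Write `B_σ(t) = ∫ w_t g_σ` with the weight `w_t(r) = f_u(r)` for `r ≤ t` and `w_t(r) = 1` for
`r > t`. Every weight dominates `min f_u 1`, and since `f_u` is monotone with `f_u(r₁) = 1`,
the weight `w_{r₁}` is exactly `min f_u 1`. As `g_σ ≥ 0`, integrating gives
`B_σ(r₁) ≤ B_σ(t)`.
-/

open MeasureTheory Set

namespace GallagerBound

variable {α : Type*} [LinearOrder α] {f g : α → ℝ}

lemma min_le_ite (f : α → ℝ) (t r : α) : min (f r) 1 ≤ if r ≤ t then f r else 1 := by
  split_ifs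
  exacts [min_le_left _ _, min_le_right _ _]

lemma ite_eq_min_of_eq_one (hf : Monotone f) {r₁ : α} (hr₁ : f r₁ = 1) (r : α) :
    (if r ≤ r₁ then f r else 1) = min (f r) 1 := by
  split_ifs with h
  · exact (min_eq_left (hr₁ ▸ hf h)).symm
  · exact (min_eq_right (hr₁ ▸ hf (not_le.mp h).le)).symm

variable [TopologicalSpace α] [MeasurableSpace α] [BorelSpace α] [OrderClosedTopology α]
  {μ : Measure α}

lemma integrable_ite_mul (hf0 : ∀ r, 0 ≤ f r) (hf : Monotone f) (hg : Integrable g μ) (t : α) :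
    Integrable (fun r => (if r ≤ t then f r else 1) * g r) μ := by
  refine hg.bdd_mul (c := max (f t) 1)
    (hf.measurable.ite measurableSet_Iic measurable_const).aestronglyMeasurable
    (Filter.Eventually.of_forall fun r => ?_)
  rw [Real.norm_eq_abs]
  split_ifs with h
  · exact (abs_of_nonneg (hf0 r)).trans_le ((hf h).trans (le_max_left _ _))
  · simp

lemma integral_ite_mul_eq (hf0 : ∀ r, 0 ≤ f r) (hf : Monotone f) (hg : Integrable g μ) (t : α) :
    ∫ r, (if r ≤ t then f r else 1) * g r ∂μ =
      (∫ r in Iic t, f r * g r ∂μ) + ∫ r in Ioi t, g r ∂μ := by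
  rw [← integral_add_compl measurableSet_Iic (integrable_ite_mul hf0 hf hg t), compl_Iic]
  congr 1
  · exact setIntegral_congr_fun measurableSet_Iic fun r (hr : r ≤ t) => by simp [hr]
  · exact setIntegral_congr_fun measurableSet_Ioi fun r (hr : t < r) => by simp [not_le.mpr hr]

theorem integral_ite_mul_le_of_eq_one (hf0 : ∀ r, 0 ≤ f r) (hf : Monotone f)
    (hg0 : ∀ r, 0 ≤ g r) (hg : Integrable g μ) {r₁ : α} (hr₁ : f r₁ = 1) (t : α) :
    ∫ r, (if r ≤ r₁ then f r else 1) * g r ∂μ ≤ ∫ r, (if r ≤ t then f r else 1) * g r ∂μ := by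
  refine integral_mono_of_nonneg (Filter.Eventually.of_forall fun r => ?_)
    (integrable_ite_mul hf0 hf hg t) (Filter.Eventually.of_forall fun r => ?_)
  · exact mul_nonneg (by split_ifs <;> simp [hf0]) (hg0 r)
  · simp only [ite_eq_min_of_eq_one hf hr₁ r]
    exact mul_le_mul_of_nonneg_right (min_le_ite f t r) (hg0 r)

end GallagerBound

theorem stmt9_general
    {S : Type*}
    (g : S → ℝ → ℝ) (hg0 : ∀ σ r, 0 ≤ g σ r)
    (hgint : ∀ σ, Integrable (g σ))
    (f_u : ℝ → ℝ) (hf0 : ∀ r, 0 ≤ f_u r) (hfmono : Monotone f_u)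
    (B : S → ℝ → ℝ)
    (hB : ∀ σ t, B σ t = (∫ r in Iic t, f_u r * g σ r) + ∫ r in Ioi t, g σ r)
    (r₁ : ℝ) (hr₁ : f_u r₁ = 1) :
    ∀ σ : S, ∀ t : ℝ, B σ r₁ ≤ B σ t := by
  intro σ t
  rw [hB, hB, ← GallagerBound.integral_ite_mul_eq hf0 hfmono (hgint σ),
    ← GallagerBound.integral_ite_mul_eq hf0 hfmono (hgint σ)]
  exact GallagerBound.integral_ite_mul_le_of_eq_one hf0 hfmono (hg0 σ) (hgint σ) hr₁ t

/-- Corollary 1 / Theorem 3: when the conditional union bound `f_u` does not depend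
on the SNR, a root `r₁` of `f_u(r) = 1` simultaneously minimizes the parameterized
Gallager bound `B_σ` for every SNR `σ`. -/
theorem stmt9
    {S : Type*} [Nonempty S]
    (g : S → ℝ → ℝ) (hg0 : ∀ σ r, 0 ≤ g σ r)
    (hgint : ∀ σ, Integrable (g σ)) (hg1 : ∀ σ, ∫ r, g σ r = 1)
    (f_u : ℝ → ℝ) (hf0 : ∀ r, 0 ≤ f_u r) (hfmono : Monotone f_u)
    (hfcont : Continuous f_u)
    (B : S → ℝ → ℝ)
    (hB : ∀ σ t, B σ t = (∫ r in Iic t, f_u r * g σ r) + ∫ r in Ioi t, g σ r)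
    (r₁ : ℝ) (hr₁ : f_u r₁ = 1) :
    ∀ σ : S, ∀ t : ℝ, B σ r₁ ≤ B σ t :=
  stmt9_general g hg0 hgint f_u hf0 hfmono B hB r₁ hr₁
end

section
/- Fix an integer n ≥ 3. For each real d with 0 < d < n define G_d : [0, ∞) → ℝ by G_d(r) = (Γ((n−1)/2) / (√π · Γ((n−2)/2))) · ∫_0^{arccos(√(n d/(n−d)) / r)} sin^{n−3}(φ) dφ for r > √(n d/(n−d)), and G_d(r) = 0 otherwise. Let A_1, …, A_{n−1} be nonnegative reals with Σ_{d=1}^{n−1} A_d ≥ 3 and at least one A_d > 0, and define f_s(r) = Σ_{d=1}^{n−1} A_d G_d(r). Then f_s is continuous and nondecreasing on [0, ∞), and there exists a unique r₁ > 0 such that f_s(r₁) = 1. -/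
/-!
Past the threshold `s_d = √(n d / (n - d))`, `G_d r` is a positive multiple of the primitive
`x ↦ ∫₀ˣ sin^{n-3}` evaluated at the cone angle `arccos (s_d / r)`; below it `G_d` vanishes.
The angle grows continuously and strictly from `0` towards `π/2`, and the Wallis integral in
Gamma form shows that the normalising constant makes `G_d` tend to `1/2`. So `f_s` rises
continuously from `f_s 0 = 0` to `(Σ A_d) / 2 ≥ 3/2 > 1`, which gives a root. The root is unique
because wherever `f_s` is positive some term with `A_d > 0` is already past its threshold, so
`f_s` is strictly increasing from there on.
-/

open Real Set Filter Topology

theorem integral_zero_pi_div_two_sin_pow (k : ℕ) :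
    ∫ x in (0:ℝ)..π / 2, sin x ^ k = √π * Gamma ((k + 1) / 2) / (2 * Gamma (k / 2 + 1)) := by
  induction k using Nat.twoStepInduction with
  | zero =>
    have h : Gamma (2⁻¹ : ℝ) = √π := by rw [← one_div, Gamma_one_half_eq]
    simp [h, mul_self_sqrt pi_pos.le]
  | one =>
    have h : Gamma ((1:ℝ) / 2 + 1) = 1 / 2 * √π := by
      rw [Gamma_add_one (by norm_num), Gamma_one_half_eq]
    have hπ : √π ≠ 0 := (sqrt_pos.mpr pi_pos).ne'
    rw [Nat.cast_one, show ((1:ℝ) + 1) / 2 = 1 by norm_num, Gamma_one, h]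
    simp only [pow_one, integral_sin, cos_zero, cos_pi_div_two]
    field_simp
    norm_num
  | more k ih _ =>
    have hk₁ : (0:ℝ) < (k + 1) / 2 := by positivity
    have hk₂ : (0:ℝ) < k / 2 + 1 := by positivity
    have e₁ : Gamma (((k:ℝ) + 2 + 1) / 2) = (k + 1) / 2 * Gamma ((k + 1) / 2) := by
      rw [show ((k:ℝ) + 2 + 1) / 2 = (k + 1) / 2 + 1 by ring, Gamma_add_one hk₁.ne']
    have e₂ : Gamma (((k:ℝ) + 2) / 2 + 1) = (k / 2 + 1) * Gamma (k / 2 + 1) := by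
      rw [show ((k:ℝ) + 2) / 2 + 1 = k / 2 + 1 + 1 by ring, Gamma_add_one hk₂.ne']
    have := (Gamma_pos_of_pos hk₁).ne'
    have := (Gamma_pos_of_pos hk₂).ne'
    rw [integral_sin_pow, ih]
    push_cast
    rw [e₁, e₂, sin_zero, cos_pi_div_two, sin_pi_div_two]
    field_simp
    ring

theorem continuous_primitive_sin_pow (k : ℕ) :
    Continuous fun x => ∫ φ in (0:ℝ)..x, sin φ ^ k :=
  intervalIntegral.continuous_primitive (fun _ _ => (continuous_sin.pow k).intervalIntegrable _ _) 0

theorem strictMonoOn_primitive_sin_pow (k : ℕ) :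
    StrictMonoOn (fun x => ∫ φ in (0:ℝ)..x, sin φ ^ k) (Icc 0 π) := by
  intro x hx y hy hxy
  have hint : ∀ a b : ℝ, IntervalIntegrable (fun φ => sin φ ^ k) MeasureTheory.volume a b :=
    fun _ _ => (continuous_sin.pow k).intervalIntegrable _ _
  have hpos : 0 < ∫ φ in x..y, sin φ ^ k :=
    intervalIntegral.intervalIntegral_pos_of_pos_on (hint x y)
      (fun φ hφ => pow_pos (sin_pos_of_pos_of_lt_pi (hx.1.trans_lt hφ.1) (hφ.2.trans_le hy.2)) k)
      hxy
  have := intervalIntegral.integral_interval_sub_left (hint 0 y) (hint 0 x)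
  dsimp only
  linarith

/-- The half-angle `arccos (s / r)` of the cone in the tangential-sphere bound, extended by `0`
for `r ≤ s`. -/
noncomputable def coneAngle (s r : ℝ) : ℝ := arccos (s / max r s)

section coneAngle

variable {s r : ℝ}

theorem coneAngle_of_le (hs : 0 < s) (h : r ≤ s) : coneAngle s r = 0 := by
  rw [coneAngle, max_eq_right h, div_self hs.ne', arccos_one]

theorem coneAngle_of_ge (h : s ≤ r) : coneAngle s r = arccos (s / r) := by
  rw [coneAngle, max_eq_left h]

theorem coneAngle_mem_Icc (hs : 0 ≤ s) (r : ℝ) : coneAngle s r ∈ Icc 0 (π / 2) :=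
  ⟨arccos_nonneg _, arccos_le_pi_div_two.mpr (div_nonneg hs (hs.trans (le_max_right _ _)))⟩

theorem continuous_coneAngle (hs : 0 < s) : Continuous (coneAngle s) :=
  continuous_arccos.comp <| continuous_const.div (continuous_id.max continuous_const)
    fun r => (hs.trans_le (le_max_right r s)).ne'

theorem monotone_coneAngle (hs : 0 < s) : Monotone (coneAngle s) := fun _ _ hab =>
  antitone_arccos <| div_le_div_of_nonneg_left hs.le (hs.trans_le (le_max_right _ _))
    (max_le_max hab le_rfl)

theorem strictMonoOn_coneAngle (hs : 0 < s) : StrictMonoOn (coneAngle s) (Ici s) := by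
  intro a ha b hb hab
  have ha₀ : 0 < a := hs.trans_le ha
  rw [coneAngle_of_ge ha, coneAngle_of_ge hb]
  refine strictAntiOn_arccos ⟨?_, ?_⟩ ⟨?_, ?_⟩ (div_lt_div_of_pos_left hs ha₀ hab)
  · linarith [div_pos hs (ha₀.trans hab)]
  · exact div_le_one_of_le₀ (ha.trans hab.le) (ha₀.trans hab).le
  · linarith [div_pos hs ha₀]
  · exact div_le_one_of_le₀ ha ha₀.le

theorem tendsto_coneAngle_atTop (s : ℝ) : Tendsto (coneAngle s) atTop (𝓝 (π / 2)) := by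
  have hratio : Tendsto (fun r => s / max r s) atTop (𝓝 0) :=
    tendsto_const_nhds.div_atTop (tendsto_atTop_mono (fun r => le_max_left r s) tendsto_id)
  rw [← arccos_zero]
  exact (continuous_arccos.tendsto 0).comp hratio

end coneAngle

noncomputable def tsbNormalization (n : ℕ) : ℝ :=
  Gamma (((n : ℝ) - 1) / 2) / (√π * Gamma (((n : ℝ) - 2) / 2))

/-- The conditional pairwise error probability `G_d` of the tangential-sphere bound, written in
terms of the threshold `s = √(n d / (n - d))`. -/
noncomputable def conePairwiseError (n : ℕ) (s r : ℝ) : ℝ :=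
  tsbNormalization n * ∫ φ in (0:ℝ)..coneAngle s r, sin φ ^ (n - 3)

section conePairwiseError

variable {n : ℕ} {s : ℝ}

theorem tsbNormalization_pos (hn : 3 ≤ n) : 0 < tsbNormalization n := by
  have hn' : (3:ℝ) ≤ n := by exact_mod_cast hn
  unfold tsbNormalization
  have := Gamma_pos_of_pos (show (0:ℝ) < ((n : ℝ) - 1) / 2 by linarith)
  have := Gamma_pos_of_pos (show (0:ℝ) < ((n : ℝ) - 2) / 2 by linarith)
  positivity

theorem tsbNormalization_mul_integral_pi_div_two (hn : 3 ≤ n) :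
    tsbNormalization n * ∫ x in (0:ℝ)..π / 2, sin x ^ (n - 3) = 1 / 2 := by
  have hn' : (3:ℝ) ≤ n := by exact_mod_cast hn
  have hcast : ((n - 3 : ℕ) : ℝ) = n - 3 := by rw [Nat.cast_sub hn]; norm_num
  have := (Gamma_pos_of_pos (show (0:ℝ) < ((n : ℝ) - 1) / 2 by linarith)).ne'
  have := (Gamma_pos_of_pos (show (0:ℝ) < ((n : ℝ) - 2) / 2 by linarith)).ne'
  have := (sqrt_pos.mpr pi_pos).ne'
  rw [integral_zero_pi_div_two_sin_pow, hcast, tsbNormalization,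
    show ((n : ℝ) - 3 + 1) / 2 = (n - 2) / 2 by ring, show ((n : ℝ) - 3) / 2 + 1 = (n - 1) / 2 by ring]
  field_simp

theorem conePairwiseError_of_le (hs : 0 < s) {r : ℝ} (h : r ≤ s) : conePairwiseError n s r = 0 := by
  rw [conePairwiseError, coneAngle_of_le hs h, intervalIntegral.integral_same, mul_zero]

theorem continuous_conePairwiseError (hs : 0 < s) : Continuous (conePairwiseError n s) :=
  continuous_const.mul ((continuous_primitive_sin_pow _).comp (continuous_coneAngle hs))

theorem monotone_conePairwiseError (hn : 3 ≤ n) (hs : 0 < s) : Monotone (conePairwiseError n s) := by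
  intro a b hab
  have hIcc : Icc 0 (π / 2) ⊆ Icc 0 π := Icc_subset_Icc_right (by linarith [pi_pos])
  exact mul_le_mul_of_nonneg_left
    ((strictMonoOn_primitive_sin_pow _).monotoneOn (hIcc (coneAngle_mem_Icc hs.le a))
      (hIcc (coneAngle_mem_Icc hs.le b)) (monotone_coneAngle hs hab))
    (tsbNormalization_pos hn).le

theorem conePairwiseError_lt_of_pos (hn : 3 ≤ n) (hs : 0 < s) {a b : ℝ}
    (hpos : 0 < conePairwiseError n s a) (hab : a < b) :
    conePairwiseError n s a < conePairwiseError n s b := by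
  have ha : s < a := by
    by_contra! h
    exact hpos.ne' (conePairwiseError_of_le hs h)
  have hIcc : Icc 0 (π / 2) ⊆ Icc 0 π := Icc_subset_Icc_right (by linarith [pi_pos])
  exact mul_lt_mul_of_pos_left
    ((strictMonoOn_primitive_sin_pow _) (hIcc (coneAngle_mem_Icc hs.le a))
      (hIcc (coneAngle_mem_Icc hs.le b))
      (strictMonoOn_coneAngle hs (mem_Ici.mpr ha.le) (mem_Ici.mpr (ha.trans hab).le) hab))
    (tsbNormalization_pos hn)

theorem tendsto_conePairwiseError_atTop (hn : 3 ≤ n) (s : ℝ) :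
    Tendsto (conePairwiseError n s) atTop (𝓝 (1 / 2)) := by
  rw [← tsbNormalization_mul_integral_pi_div_two hn]
  exact tendsto_const_nhds.mul
    (((continuous_primitive_sin_pow _).tendsto _).comp (tendsto_coneAngle_atTop s))

end conePairwiseError

theorem Finset.sum_mul_lt_sum_mul_of_pos {ι : Type*} {t : Finset ι} {w : ι → ℝ} {g : ι → ℝ → ℝ}
    (hw : ∀ i ∈ t, 0 ≤ w i) (hmono : ∀ i ∈ t, Monotone (g i))
    (hstrict : ∀ i ∈ t, ∀ a b, 0 < g i a → a < b → g i a < g i b) {a b : ℝ}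
    (hpos : 0 < ∑ i ∈ t, w i * g i a) (hab : a < b) :
    ∑ i ∈ t, w i * g i a < ∑ i ∈ t, w i * g i b := by
  obtain ⟨i, hi, hi_pos⟩ :=
    Finset.exists_lt_of_sum_lt (f := fun _ => (0:ℝ)) (by simpa using hpos)
  have hg_pos : 0 < g i a := pos_of_mul_pos_right hi_pos (hw i hi)
  have hw_pos : 0 < w i := pos_of_mul_pos_left hi_pos hg_pos.le
  exact Finset.sum_lt_sum (fun j hj => mul_le_mul_of_nonneg_left (hmono j hj hab.le) (hw j hj))
    ⟨i, hi, mul_lt_mul_of_pos_left (hstrict i hi a b hg_pos hab) hw_pos⟩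

theorem existsUnique_pos_eq_of_tendsto {f : ℝ → ℝ} {c L : ℝ} (hf : Continuous f) (h0 : f 0 = 0)
    (hc : 0 < c) (hcL : c < L) (hlim : Tendsto f atTop (𝓝 L))
    (hstrict : ∀ a b, 0 < f a → a < b → f a < f b) : ∃! r, 0 < r ∧ f r = c := by
  obtain ⟨R, hR, hR₀⟩ := ((hlim.eventually (lt_mem_nhds hcL)).and (eventually_ge_atTop 0)).exists
  obtain ⟨r, hr, hfr⟩ := intermediate_value_Icc hR₀ hf.continuousOn ⟨h0.symm ▸ hc.le, hR.le⟩
  have hr₀ : 0 < r := hr.1.lt_of_ne (by rintro rfl; exact hc.ne' (hfr ▸ h0))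
  refine ⟨r, ⟨hr₀, hfr⟩, fun y ⟨_, hfy⟩ => ?_⟩
  rcases lt_trichotomy y r with h | h | h
  · linarith [hstrict y r (hfy ▸ hc) h]
  · exact h
  · linarith [hstrict r y (hfr ▸ hc) h]

/-- The conditional union bound `f_s = Σ_d A_d G_d`, with `s i` the threshold of the `i`-th term. -/
noncomputable def conditionalUnionBound {ι : Type*} (n : ℕ) (t : Finset ι) (A s : ι → ℝ) (r : ℝ) :
    ℝ :=
  ∑ i ∈ t, A i * conePairwiseError n (s i) r

section conditionalUnionBound

variable {ι : Type*} {n : ℕ} {t : Finset ι} {A s : ι → ℝ}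

theorem continuous_conditionalUnionBound (hs : ∀ i ∈ t, 0 < s i) :
    Continuous (conditionalUnionBound n t A s) :=
  continuous_finsetSum _ fun i hi => continuous_const.mul (continuous_conePairwiseError (hs i hi))

theorem monotone_conditionalUnionBound (hn : 3 ≤ n) (hA : ∀ i ∈ t, 0 ≤ A i)
    (hs : ∀ i ∈ t, 0 < s i) : Monotone (conditionalUnionBound n t A s) := fun _ _ hab =>
  Finset.sum_le_sum fun i hi =>
    mul_le_mul_of_nonneg_left (monotone_conePairwiseError hn (hs i hi) hab) (hA i hi)

theorem existsUnique_conditionalUnionBound_eq_one (hn : 3 ≤ n) (hA : ∀ i ∈ t, 0 ≤ A i)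
    (hs : ∀ i ∈ t, 0 < s i) (hAsum : 2 < ∑ i ∈ t, A i) :
    ∃! r, 0 < r ∧ conditionalUnionBound n t A s r = 1 := by
  have hzero : conditionalUnionBound n t A s 0 = 0 := Finset.sum_eq_zero fun i hi => by
    rw [conePairwiseError_of_le (hs i hi) (hs i hi).le, mul_zero]
  have hlim : Tendsto (conditionalUnionBound n t A s) atTop (𝓝 (∑ i ∈ t, A i * (1 / 2))) :=
    tendsto_finsetSum _ fun i _ => (tendsto_conePairwiseError_atTop hn (s i)).const_mul (A i)
  refine existsUnique_pos_eq_of_tendsto (continuous_conditionalUnionBound hs) hzero one_pos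
    (by rw [← Finset.sum_mul]; linarith) hlim fun _ _ hpos hab => ?_
  exact Finset.sum_mul_lt_sum_mul_of_pos hA (fun i hi => monotone_conePairwiseError hn (hs i hi))
    (fun i hi _ _ => conePairwiseError_lt_of_pos hn (hs i hi)) hpos hab

end conditionalUnionBound

theorem stmt17_general
    (n : ℕ) (hn : 3 ≤ n)
    (G : ℝ → ℝ → ℝ)
    (hG : ∀ d : ℝ, 0 < d → d < n → ∀ r : ℝ,
      Real.sqrt ((n : ℝ) * d / ((n : ℝ) - d)) < r →
      G d r = (Real.Gamma (((n : ℝ) - 1) / 2) /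
          (Real.sqrt π * Real.Gamma (((n : ℝ) - 2) / 2))) *
        ∫ φ in (0 : ℝ)..Real.arccos (Real.sqrt ((n : ℝ) * d / ((n : ℝ) - d)) / r),
          (Real.sin φ) ^ (n - 3))
    (hG0 : ∀ d : ℝ, 0 < d → d < n → ∀ r : ℝ, 0 ≤ r →
      r ≤ Real.sqrt ((n : ℝ) * d / ((n : ℝ) - d)) → G d r = 0)
    (A : ℕ → ℝ) (hA0 : ∀ d, 0 ≤ A d)
    (hAsum : 3 ≤ ∑ d ∈ Finset.Icc 1 (n - 1), A d)
    (f_s : ℝ → ℝ) (hfs : ∀ r, f_s r = ∑ d ∈ Finset.Icc 1 (n - 1), A d * G (d : ℝ) r) :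
    ContinuousOn f_s (Ici 0) ∧ MonotoneOn f_s (Ici 0) ∧
      ∃! r₁ : ℝ, 0 < r₁ ∧ f_s r₁ = 1 := by
  set s : ℕ → ℝ := fun d => √((n : ℝ) * d / ((n : ℝ) - d))
  have hrange : ∀ d ∈ Finset.Icc 1 (n - 1), 0 < (d : ℝ) ∧ (d : ℝ) < n := fun d hd => by
    rw [Finset.mem_Icc] at hd
    exact ⟨by exact_mod_cast hd.1, by exact_mod_cast (show d < n by omega)⟩
  have hs : ∀ d ∈ Finset.Icc 1 (n - 1), 0 < s d := fun d hd =>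
    sqrt_pos.mpr (div_pos (mul_pos (by linarith [(hrange d hd).2]) (hrange d hd).1)
      (sub_pos.mpr (hrange d hd).2))
  have hG_eq : ∀ d ∈ Finset.Icc 1 (n - 1), ∀ r, 0 ≤ r → G d r = conePairwiseError n (s d) r := by
    intro d hd r hr
    rcases le_or_gt r (s d) with h | h
    · rw [hG0 d (hrange d hd).1 (hrange d hd).2 r hr h, conePairwiseError_of_le (hs d hd) h]
    · rw [hG d (hrange d hd).1 (hrange d hd).2 r h, conePairwiseError, coneAngle_of_ge h.le,
        tsbNormalization]
  have hf_eq : EqOn f_s (conditionalUnionBound n (Finset.Icc 1 (n - 1)) A s) (Ici 0) :=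
    fun r hr => (hfs r).trans (Finset.sum_congr rfl fun d hd => by rw [hG_eq d hd r hr])
  have hA : ∀ d ∈ Finset.Icc 1 (n - 1), 0 ≤ A d := fun d _ => hA0 d
  refine ⟨(continuous_conditionalUnionBound hs).continuousOn.congr hf_eq,
    fun a ha b hb hab => ?_, ?_⟩
  · rw [hf_eq ha, hf_eq hb]
    exact monotone_conditionalUnionBound hn hA hs hab
  · refine (existsUnique_congr fun r => and_congr_right fun hr => ?_).mpr
      (existsUnique_conditionalUnionBound_eq_one hn hA hs (by linarith))
    rw [hf_eq hr.le]

/-- The conditional union bound (21) of the tangential-sphere bound of Poltyrev,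
`f_s(r) = Σ_d A_d G_d(r)`, is continuous and nondecreasing on `[0, ∞)` and has a
unique root `r₁ > 0` of `f_s(r) = 1` (equation (22)). -/
theorem stmt17
    (n : ℕ) (hn : 3 ≤ n)
    (G : ℝ → ℝ → ℝ)
    (hG : ∀ d : ℝ, 0 < d → d < n → ∀ r : ℝ,
      Real.sqrt ((n : ℝ) * d / ((n : ℝ) - d)) < r →
      G d r = (Real.Gamma (((n : ℝ) - 1) / 2) /
          (Real.sqrt π * Real.Gamma (((n : ℝ) - 2) / 2))) *
        ∫ φ in (0 : ℝ)..Real.arccos (Real.sqrt ((n : ℝ) * d / ((n : ℝ) - d)) / r),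
          (Real.sin φ) ^ (n - 3))
    (hG0 : ∀ d : ℝ, 0 < d → d < n → ∀ r : ℝ, 0 ≤ r →
      r ≤ Real.sqrt ((n : ℝ) * d / ((n : ℝ) - d)) → G d r = 0)
    (A : ℕ → ℝ) (hA0 : ∀ d, 0 ≤ A d)
    (hAsum : 3 ≤ ∑ d ∈ Finset.Icc 1 (n - 1), A d)
    (hApos : ∃ d ∈ Finset.Icc 1 (n - 1), 0 < A d)
    (f_s : ℝ → ℝ) (hfs : ∀ r, f_s r = ∑ d ∈ Finset.Icc 1 (n - 1), A d * G (d : ℝ) r) :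
    ContinuousOn f_s (Ici 0) ∧ MonotoneOn f_s (Ici 0) ∧
      ∃! r₁ : ℝ, 0 < r₁ ∧ f_s r₁ = 1 :=
  stmt17_general n hn G hG hG0 A hA0 hAsum f_s hfs
end
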